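/- Let β ∈ ℂ∖(−∞,0] and define, for ζ ∈ ℂ∖(−∞,1], F_β(ζ) := β^{1/2} · ( (i + (ζ−1)^{1/2}) / (i − (ζ−1)^{1/2}) )^{log β / (2πi)}, where (ζ−1)^{1/2} is the principal square root, log β and β^{1/2} are principal, and the outer power w^{log β/(2πi)} = exp((log β/(2πi))·Log w) uses the principal logarithm (well-defined since (i+(ζ−1)^{1/2})/(i−(ζ−1)^{1/2}) lies in the lower half-plane). Then: (1) F_β is holomorphic and non-vanishing on ℂ∖(−∞,1]; (2) for x ∈ (−∞,0), the boundary values from above and below satisfy F_{β+}(x)·F_{β−}(x) = 1, and for x ∈ (0,1) they satisfy F_{β+}(x)·F_{β−}(x) = β; (3) F_β(ζ) = 1 + O(ζ^{−1/2}) as ζ → ∞, uniformly in ℂ∖(−∞,1]. -/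

import Mathlib

open Complex Filter Topology

noncomputable section

/-- The slit plane `ℂ ∖ (−∞,1]`. -/
def SlitPlane1 : Set ℂ := {ζ : ℂ | ¬(ζ.im = 0 ∧ ζ.re ≤ 1)}

/-- `F_β(ζ) = β^{1/2} ((i + (ζ−1)^{1/2})/(i − (ζ−1)^{1/2}))^{log β/(2πi)}`, all branches
principal. -/
def Ffun (β : ℂ) (ζ : ℂ) : ℂ :=
  β ^ ((1 : ℂ) / 2) *
    ((Complex.I + (ζ - 1) ^ ((1 : ℂ) / 2)) / (Complex.I - (ζ - 1) ^ ((1 : ℂ) / 2)))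
      ^ (Complex.log β / (2 * (Real.pi : ℂ) * Complex.I))


/-!
With `s = (ζ − 1)^{1/2}` in the right half-plane, `w = (i + s)/(i − s)` lies in the lower
half-plane, so `F_β = β^{1/2} exp (c log w)`, `c = log β / (2πi)`, is holomorphic and zero-free.
On the cut, `s(x ± i0) = ±i√(1 − x)`, so `w(x ± i0)` are the reciprocal reals `r^{±1}`,
`r = (1 + √(1 − x))/(1 − √(1 − x))`, both approached from below, where `log` has boundary value
`conj (log r)`. These two boundary logarithms add up to `−2πi` when `r < 0` (i.e. `x < 0`) and to
`0` when `r > 0` (i.e. `0 < x < 1`), giving the jumps `1` and `β`. Finally `β^{1/2} = exp (iπc)`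
turns `F_β` into `exp (c log (−w))`, and `−w = 1 + 2i/(s − i) = 1 + O(ζ^{−1/2})`.
-/

open ComplexConjugate
open scoped Real

def cayley (s : ℂ) : ℂ := (I + s) / (I - s)

lemma Ffun_eq_cayley (β ζ : ℂ) :
    Ffun β ζ = β ^ (1 / 2 : ℂ) * cayley ((ζ - 1) ^ (1 / 2 : ℂ)) ^ (log β / (2 * π * I)) :=
  rfl

lemma mem_SlitPlane1_of_im_ne_zero {ζ : ℂ} (h : ζ.im ≠ 0) : ζ ∈ SlitPlane1 :=
  fun h' => h h'.1

lemma sub_one_mem_slitPlane {ζ : ℂ} (h : ζ ∈ SlitPlane1) : ζ - 1 ∈ slitPlane := by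
  rw [mem_slitPlane_iff, sub_re, sub_im, one_re, one_im, sub_zero, sub_pos]
  by_cases him : ζ.im = 0
  · exact Or.inl (not_le.1 fun hre => h ⟨him, hre⟩)
  · exact Or.inr him

lemma re_cpow_half_pos {z : ℂ} (hz : z ∈ slitPlane) : 0 < (z ^ (1 / 2 : ℂ)).re := by
  rw [one_div, cpow_inv_two_re, Real.sqrt_pos]
  rcases hz with hre | him
  · positivity
  · linarith [neg_abs_le z.re, abs_re_lt_norm.2 him]

lemma I_sub_ne_zero_of_re_pos {s : ℂ} (hs : 0 < s.re) : I - s ≠ 0 :=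
  fun h => hs.ne (by simpa using congrArg re (sub_eq_zero.1 h))

lemma im_cayley_neg {s : ℂ} (hs : 0 < s.re) : (cayley s).im < 0 := by
  have hI := normSq_pos.2 (I_sub_ne_zero_of_re_pos hs)
  have him : (cayley s).im = -(2 * s.re) / normSq (I - s) := by
    rw [cayley, div_im, div_sub_div_same]
    congr 1
    simp only [add_im, add_re, sub_re, sub_im, I_re, I_im]
    ring
  rw [him]
  exact div_neg_of_neg_of_pos (by linarith) hI

lemma im_cayley_cpow_half_neg {ζ : ℂ} (h : ζ ∈ SlitPlane1) :
    (cayley ((ζ - 1) ^ (1 / 2 : ℂ))).im < 0 :=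
  im_cayley_neg (re_cpow_half_pos (sub_one_mem_slitPlane h))

lemma cayley_cpow_half_mem_slitPlane {ζ : ℂ} (h : ζ ∈ SlitPlane1) :
    cayley ((ζ - 1) ^ (1 / 2 : ℂ)) ∈ slitPlane :=
  Or.inr (im_cayley_cpow_half_neg h).ne

lemma differentiableOn_Ffun (β : ℂ) : DifferentiableOn ℂ (Ffun β) SlitPlane1 := by
  intro ζ hζ
  have hs : DifferentiableAt ℂ (fun z : ℂ => (z - 1) ^ (1 / 2 : ℂ)) ζ :=
    (differentiableAt_id.sub_const 1).cpow_const (sub_one_mem_slitPlane hζ)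
  have hw : DifferentiableAt ℂ (fun z : ℂ => cayley ((z - 1) ^ (1 / 2 : ℂ))) ζ :=
    ((differentiableAt_const I).add hs).div ((differentiableAt_const I).sub hs)
      (I_sub_ne_zero_of_re_pos (re_cpow_half_pos (sub_one_mem_slitPlane hζ)))
  exact ((differentiableAt_const _).mul
    (hw.cpow_const (cayley_cpow_half_mem_slitPlane hζ))).differentiableWithinAt

/-- Because `β^{1/2} = exp(iπ · log β/(2πi))`, the prefactor is absorbed by passing from `w` to
`−w`. -/
lemma Ffun_eq_exp {β ζ : ℂ} (hβ : β ≠ 0) (hζ : ζ ∈ SlitPlane1) :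
    Ffun β ζ = exp (log (-cayley ((ζ - 1) ^ (1 / 2 : ℂ))) * (log β / (2 * π * I))) := by
  have hw := im_cayley_cpow_half_neg hζ
  have hw0 := slitPlane_ne_zero (cayley_cpow_half_mem_slitPlane hζ)
  set w := cayley ((ζ - 1) ^ (1 / 2 : ℂ))
  have hlog : log (-w) = log w + π * I := by
    apply Complex.ext
    · simp [log_re]
    · simp [log_im, arg_neg_eq_arg_add_pi_of_im_neg hw]
  rw [Ffun_eq_cayley, cpow_def_of_ne_zero hβ, cpow_def_of_ne_zero hw0,
    ← exp_add, hlog]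
  congr 1
  field_simp
  ring

lemma Ffun_ne_zero {β ζ : ℂ} (hβ : β ≠ 0) (hζ : ζ ∈ SlitPlane1) : Ffun β ζ ≠ 0 := by
  rw [Ffun_eq_exp hβ hζ]
  exact exp_ne_zero _

lemma cpow_half_of_im_nonneg {z : ℂ} (hz : 0 ≤ z.im) :
    z ^ (1 / 2 : ℂ) = √((‖z‖ + z.re) / 2) + √((‖z‖ - z.re) / 2) * I := by
  apply Complex.ext <;> simp [one_div, cpow_inv_two_re, cpow_inv_two_im_eq_sqrt hz]

lemma cpow_half_of_im_neg {z : ℂ} (hz : z.im < 0) :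
    z ^ (1 / 2 : ℂ) = √((‖z‖ + z.re) / 2) - √((‖z‖ - z.re) / 2) * I := by
  apply Complex.ext <;> simp [one_div, cpow_inv_two_re, cpow_inv_two_im_eq_neg_sqrt hz]

lemma sqrt_norm_add_re_sub_one {x : ℝ} (hx : x < 1) :
    √((‖(x : ℂ) - 1‖ + ((x : ℂ) - 1).re) / 2) = 0 ∧
      √((‖(x : ℂ) - 1‖ - ((x : ℂ) - 1).re) / 2) = √(1 - x) := by
  rw [← ofReal_one, ← ofReal_sub, norm_real, ofReal_re, Real.norm_of_nonpos (by linarith)]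
  exact ⟨by simp, by ring_nf⟩

lemma tendsto_sub_one_cpow_half_nhdsWithin_im_nonneg {x : ℝ} (hx : x < 1) :
    Tendsto (fun ζ : ℂ => (ζ - 1) ^ (1 / 2 : ℂ)) (𝓝[{z | 0 ≤ z.im}] (x : ℂ))
      (𝓝 (I * √(1 - x))) := by
  have h : Continuous fun ζ : ℂ =>
      (√((‖ζ - 1‖ + (ζ - 1).re) / 2) + √((‖ζ - 1‖ - (ζ - 1).re) / 2) * I : ℂ) := by
    fun_prop
  have h0 := h.tendsto x
  rw [(sqrt_norm_add_re_sub_one hx).1, (sqrt_norm_add_re_sub_one hx).2, ofReal_zero, zero_add,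
    mul_comm] at h0
  refine (tendsto_nhdsWithin_of_tendsto_nhds h0).congr'
    (eventually_nhdsWithin_of_forall fun ζ hζ => (cpow_half_of_im_nonneg ?_).symm)
  simpa using hζ

lemma tendsto_sub_one_cpow_half_nhdsWithin_im_neg {x : ℝ} (hx : x < 1) :
    Tendsto (fun ζ : ℂ => (ζ - 1) ^ (1 / 2 : ℂ)) (𝓝[{z | z.im < 0}] (x : ℂ))
      (𝓝 (-(I * √(1 - x)))) := by
  have h : Continuous fun ζ : ℂ =>
      (√((‖ζ - 1‖ + (ζ - 1).re) / 2) - √((‖ζ - 1‖ - (ζ - 1).re) / 2) * I : ℂ) := by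
    fun_prop
  have h0 := h.tendsto x
  rw [(sqrt_norm_add_re_sub_one hx).1, (sqrt_norm_add_re_sub_one hx).2, ofReal_zero, zero_sub,
    mul_comm] at h0
  refine (tendsto_nhdsWithin_of_tendsto_nhds h0).congr'
    (eventually_nhdsWithin_of_forall fun ζ hζ => (cpow_half_of_im_neg ?_).symm)
  simpa using hζ

lemma tendsto_ofReal_add_mul_I (x : ℝ) :
    Tendsto (fun ε : ℝ => (x : ℂ) + ε * I) (𝓝[>] 0) (𝓝[{z | 0 ≤ z.im}] (x : ℂ)) :=
  tendsto_nhdsWithin_iff.2 ⟨((Continuous.tendsto' (by fun_prop) 0 _ (by simp))).mono_left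
    nhdsWithin_le_nhds, eventually_nhdsWithin_of_forall fun ε hε => by simpa using le_of_lt hε⟩

lemma tendsto_ofReal_sub_mul_I (x : ℝ) :
    Tendsto (fun ε : ℝ => (x : ℂ) - ε * I) (𝓝[>] 0) (𝓝[{z | z.im < 0}] (x : ℂ)) :=
  tendsto_nhdsWithin_iff.2 ⟨((Continuous.tendsto' (by fun_prop) 0 _ (by simp))).mono_left
    nhdsWithin_le_nhds, eventually_nhdsWithin_of_forall fun ε hε => by simpa using hε⟩

lemma tendsto_log_nhdsWithin_im_neg_ofReal {r : ℝ} (hr : r ≠ 0) :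
    Tendsto log (𝓝[{z | z.im < 0}] (r : ℂ)) (𝓝 (conj (log r))) := by
  rcases hr.lt_or_gt with hneg | hpos
  · convert tendsto_log_nhdsWithin_im_neg_of_re_neg_of_im_zero (z := r) (by simpa using hneg)
      (ofReal_im r) using 2
    simp [log, arg_ofReal_of_neg hneg, sub_eq_add_neg]
  · rw [← ofReal_log hpos.le, conj_ofReal, ofReal_log hpos.le]
    exact tendsto_nhdsWithin_of_tendsto_nhds
      (continuousAt_clog (ofReal_mem_slitPlane.2 hpos)).tendsto

lemma conj_log_add_conj_log_inv_of_neg {r : ℝ} (hr : r < 0) :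
    conj (log r) + conj (log (r : ℂ)⁻¹) = -(2 * π * I) := by
  rw [log_inv_eq_ite, if_pos (arg_ofReal_of_neg hr), map_neg, conj_conj]
  apply Complex.ext <;> simp [log, arg_ofReal_of_neg hr]
  ring

lemma conj_log_add_conj_log_inv_of_pos {r : ℝ} (hr : 0 < r) :
    conj (log r) + conj (log (r : ℂ)⁻¹) = 0 := by
  rw [log_inv _ (by simp [arg_ofReal_of_nonneg hr.le, Real.pi_ne_zero.symm]), map_neg,
    add_neg_cancel]

lemma cayley_I_mul_ofReal (t : ℝ) : cayley (I * t) = ((1 + t) / (1 - t) : ℝ) := by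
  rw [cayley, show I + I * t = I * (1 + t) by ring, show I - I * t = I * (1 - t) by ring,
    mul_div_mul_left _ _ I_ne_zero]
  push_cast
  rfl

lemma cayley_neg (s : ℂ) : cayley (-s) = (cayley s)⁻¹ := by
  rw [cayley, cayley, inv_div, sub_neg_eq_add, ← sub_eq_add_neg]

/-- If `w = cayley ((ζ − 1)^{1/2})` tends to a nonzero real `r` along a path, it does so from the
lower half-plane, where `log` has the limit `conj (log r)`. -/
lemma tendsto_Ffun_of_tendsto_cpow_half {β : ℂ} {l : Filter ℝ} {f : ℝ → ℂ}
    (hf : ∀ᶠ ε in l, f ε ∈ SlitPlane1) {s₀ : ℂ}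
    (hs : Tendsto (fun ε => (f ε - 1) ^ (1 / 2 : ℂ)) l (𝓝 s₀)) {r : ℝ} (hr : r ≠ 0)
    (hs₀ : cayley s₀ = r) :
    Tendsto (fun ε => Ffun β (f ε)) l
      (𝓝 (β ^ (1 / 2 : ℂ) * exp (conj (log r) * (log β / (2 * π * I))))) := by
  have hI : I - s₀ ≠ 0 := fun h => hr (by simpa [cayley, h] using hs₀.symm)
  have hw : Tendsto (fun ε => cayley ((f ε - 1) ^ (1 / 2 : ℂ))) l (𝓝[{z | z.im < 0}] (r : ℂ)) :=
    tendsto_nhdsWithin_iff.2 ⟨hs₀ ▸ (tendsto_const_nhds.add hs).div (tendsto_const_nhds.sub hs) hI,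
      hf.mono fun ε h => im_cayley_cpow_half_neg h⟩
  refine (tendsto_const_nhds.mul ((continuous_exp.tendsto _).comp
    (((tendsto_log_nhdsWithin_im_neg_ofReal hr).comp hw).mul_const _))).congr' ?_
  filter_upwards [hf] with ε h
  rw [Ffun_eq_cayley, cpow_def_of_ne_zero (slitPlane_ne_zero (cayley_cpow_half_mem_slitPlane h))]
  rfl

/-- The boundary value of `cayley ((ζ − 1)^{1/2})` at `x + i0`, `x < 1`; at `x − i0` it is the
reciprocal. -/
def cayleyCut (x : ℝ) : ℝ := (1 + √(1 - x)) / (1 - √(1 - x))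

lemma cayleyCut_neg {x : ℝ} (hx : x < 0) : cayleyCut x < 0 := by
  have ht : 1 < √(1 - x) := Real.lt_sqrt_of_sq_lt (by linarith)
  exact div_neg_of_pos_of_neg (by linarith) (by linarith)

lemma cayleyCut_pos {x : ℝ} (hx₀ : 0 < x) (hx₁ : x < 1) : 0 < cayleyCut x := by
  have ht : √(1 - x) < 1 := (Real.sqrt_lt' one_pos).2 (by linarith)
  exact div_pos (by positivity) (by linarith)

lemma tendsto_Ffun_upper (β : ℂ) {x : ℝ} (hx : x < 1) (hr : cayleyCut x ≠ 0) :
    Tendsto (fun ε : ℝ => Ffun β (x + ε * I)) (𝓝[>] 0)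
      (𝓝 (β ^ (1 / 2 : ℂ) * exp (conj (log (cayleyCut x)) * (log β / (2 * π * I))))) :=
  tendsto_Ffun_of_tendsto_cpow_half
    (eventually_nhdsWithin_of_forall fun ε hε =>
      mem_SlitPlane1_of_im_ne_zero (by simpa using hε.ne'))
    ((tendsto_sub_one_cpow_half_nhdsWithin_im_nonneg hx).comp (tendsto_ofReal_add_mul_I x)) hr
    (cayley_I_mul_ofReal _)

lemma tendsto_Ffun_lower (β : ℂ) {x : ℝ} (hx : x < 1) (hr : cayleyCut x ≠ 0) :
    Tendsto (fun ε : ℝ => Ffun β (x - ε * I)) (𝓝[>] 0)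
      (𝓝 (β ^ (1 / 2 : ℂ) * exp (conj (log (cayleyCut x : ℂ)⁻¹) * (log β / (2 * π * I))))) := by
  rw [← ofReal_inv]
  exact tendsto_Ffun_of_tendsto_cpow_half
    (eventually_nhdsWithin_of_forall fun ε hε =>
      mem_SlitPlane1_of_im_ne_zero (by simpa using hε.ne'))
    ((tendsto_sub_one_cpow_half_nhdsWithin_im_neg hx).comp (tendsto_ofReal_sub_mul_I x))
    (inv_ne_zero hr) (by rw [cayley_neg, cayley_I_mul_ofReal, ofReal_inv]; rfl)

lemma cpow_half_mul_exp_mul_cpow_half_mul_exp {β : ℂ} (hβ : β ≠ 0) (a b c : ℂ) :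
    β ^ (1 / 2 : ℂ) * exp (a * c) * (β ^ (1 / 2 : ℂ) * exp (b * c)) = β * exp ((a + b) * c) := by
  have hβ2 : β ^ (1 / 2 : ℂ) * β ^ (1 / 2 : ℂ) = β := by
    rw [← cpow_add _ _ hβ]
    norm_num
  rw [add_mul, exp_add]
  linear_combination exp (a * c) * exp (b * c) * hβ2

lemma Ffun_boundary_mul_of_neg {β : ℂ} (hβ : β ≠ 0) {x : ℝ} (hx : x < 0) :
    ∃ Fp Fm : ℂ, Tendsto (fun ε : ℝ => Ffun β (x + ε * I)) (𝓝[>] 0) (𝓝 Fp) ∧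
      Tendsto (fun ε : ℝ => Ffun β (x - ε * I)) (𝓝[>] 0) (𝓝 Fm) ∧ Fp * Fm = 1 := by
  have hr := cayleyCut_neg hx
  refine ⟨_, _, tendsto_Ffun_upper β (hx.trans one_pos) hr.ne,
    tendsto_Ffun_lower β (hx.trans one_pos) hr.ne, ?_⟩
  rw [cpow_half_mul_exp_mul_cpow_half_mul_exp hβ, conj_log_add_conj_log_inv_of_neg hr, neg_mul,
    mul_div_cancel₀ _ two_pi_I_ne_zero, exp_neg, exp_log hβ, mul_inv_cancel₀ hβ]

lemma Ffun_boundary_mul_of_pos {β : ℂ} (hβ : β ≠ 0) {x : ℝ} (hx₀ : 0 < x) (hx₁ : x < 1) :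
    ∃ Fp Fm : ℂ, Tendsto (fun ε : ℝ => Ffun β (x + ε * I)) (𝓝[>] 0) (𝓝 Fp) ∧
      Tendsto (fun ε : ℝ => Ffun β (x - ε * I)) (𝓝[>] 0) (𝓝 Fm) ∧ Fp * Fm = β := by
  have hr := cayleyCut_pos hx₀ hx₁
  refine ⟨_, _, tendsto_Ffun_upper β hx₁ hr.ne', tendsto_Ffun_lower β hx₁ hr.ne', ?_⟩
  rw [cpow_half_mul_exp_mul_cpow_half_mul_exp hβ, conj_log_add_conj_log_inv_of_pos hr, zero_mul,
    exp_zero, mul_one]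

lemma neg_cayley {s : ℂ} (hs : s ≠ I) : -cayley s = 1 + 2 * I / (s - I) := by
  have hs' : I - s ≠ 0 := sub_ne_zero.2 hs.symm
  rw [cayley]
  field_simp
  ring

lemma norm_cpow_half (z : ℂ) : ‖z ^ (1 / 2 : ℂ)‖ = √‖z‖ := by
  rw [Real.sqrt_eq_rpow, ← norm_cpow_real]
  norm_num

lemma sqrt_norm_div_two_add_one_le {ζ : ℂ} (h : 64 ≤ ‖ζ‖) :
    √‖ζ‖ / 2 + 1 ≤ ‖(ζ - 1) ^ (1 / 2 : ℂ)‖ := by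
  set b := √‖ζ‖
  have hb2 : b ^ 2 = ‖ζ‖ := Real.sq_sqrt (norm_nonneg ζ)
  have hb8 : 8 ≤ b := Real.le_sqrt_of_sq_le (by linarith)
  have hζ1 : ‖ζ‖ - 1 ≤ ‖ζ - 1‖ := by simpa using norm_sub_norm_le ζ 1
  rw [norm_cpow_half]
  exact Real.le_sqrt_of_sq_le (by nlinarith)

lemma norm_log_one_add_two_I_div_le {s : ℂ} {b : ℝ} (hb : 8 ≤ b) (hs : b / 2 + 1 ≤ ‖s‖) :
    ‖log (1 + 2 * I / (s - I))‖ ≤ 6 / b := by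
  have hsI : b / 2 ≤ ‖s - I‖ := by linarith [norm_sub_norm_le s I, norm_I]
  have hu : ‖2 * I / (s - I)‖ ≤ 4 / b := by
    rw [norm_div, norm_mul, norm_I, Complex.norm_two, mul_one,
      div_le_div_iff₀ (by linarith) (by linarith)]
    linarith
  calc ‖log (1 + 2 * I / (s - I))‖ ≤ 3 / 2 * ‖2 * I / (s - I)‖ :=
        norm_log_one_add_half_le_self (hu.trans ((div_le_iff₀ (by linarith)).2 (by linarith)))
    _ ≤ 3 / 2 * (4 / b) := by gcongr
    _ = 6 / b := by ring

lemma norm_Ffun_sub_one_le {β ζ : ℂ} (hβ : β ≠ 0) (hζ : ζ ∈ SlitPlane1)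
    (h8 : 8 ≤ √‖ζ‖) (hc : 6 * ‖log β / (2 * π * I)‖ ≤ √‖ζ‖) :
    ‖Ffun β ζ - 1‖ ≤ 12 * ‖log β / (2 * π * I)‖ / √‖ζ‖ := by
  set c := log β / (2 * π * I)
  set b := √‖ζ‖
  have h64 : 64 ≤ ‖ζ‖ := by nlinarith [Real.sq_sqrt (norm_nonneg ζ)]
  have hs := sqrt_norm_div_two_add_one_le h64
  have hsI : (ζ - 1) ^ (1 / 2 : ℂ) ≠ I := fun h => by
    rw [h, norm_I] at hs
    linarith
  set L := log (-cayley ((ζ - 1) ^ (1 / 2 : ℂ)))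
  have hL : ‖L‖ ≤ 6 / b := by
    simpa only [L, neg_cayley hsI] using norm_log_one_add_two_I_div_le h8 hs
  have hLc : ‖L * c‖ ≤ 6 / b * ‖c‖ := by
    rw [norm_mul]
    gcongr
  rw [Ffun_eq_exp hβ hζ]
  calc ‖exp (L * c) - 1‖ ≤ 2 * ‖L * c‖ :=
        norm_exp_sub_one_le (hLc.trans (by rwa [div_mul_eq_mul_div, div_le_one (by linarith)]))
    _ ≤ 2 * (6 / b * ‖c‖) := by gcongr
    _ = 12 * ‖c‖ / b := by ring

lemma exists_norm_Ffun_sub_one_le {β : ℂ} (hβ : β ≠ 0) :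
    ∃ C R : ℝ, ∀ ζ ∈ SlitPlane1, R ≤ ‖ζ‖ → ‖Ffun β ζ - 1‖ ≤ C / √‖ζ‖ := by
  set c := log β / (2 * π * I)
  refine ⟨12 * ‖c‖, max 8 (6 * ‖c‖) ^ 2, fun ζ hζ hR => ?_⟩
  have hb := max_le_iff.1 (Real.le_sqrt_of_sq_le hR)
  exact norm_Ffun_sub_one_le hβ hζ hb.1 hb.2

/-- The Szegő-type function `F_β`: holomorphic and non-vanishing on the
slit plane, multiplicative boundary relations `F_{β+}F_{β−} = 1` on `(−∞,0)` and `= β` on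
`(0,1)`, and `F_β(ζ) = 1 + O(ζ^{−1/2})` at infinity. -/
theorem Ffun_properties (β : ℂ) (hβ : ¬(β.im = 0 ∧ β.re ≤ 0)) :
    DifferentiableOn ℂ (Ffun β) SlitPlane1 ∧
    (∀ ζ ∈ SlitPlane1, Ffun β ζ ≠ 0) ∧
    (∀ x : ℝ, x < 0 → ∃ Fp Fm : ℂ,
      Tendsto (fun ε : ℝ => Ffun β ((x : ℂ) + ε * Complex.I))
        (nhdsWithin 0 (Set.Ioi 0)) (𝓝 Fp) ∧
      Tendsto (fun ε : ℝ => Ffun β ((x : ℂ) - ε * Complex.I))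
        (nhdsWithin 0 (Set.Ioi 0)) (𝓝 Fm) ∧
      Fp * Fm = 1) ∧
    (∀ x : ℝ, 0 < x → x < 1 → ∃ Fp Fm : ℂ,
      Tendsto (fun ε : ℝ => Ffun β ((x : ℂ) + ε * Complex.I))
        (nhdsWithin 0 (Set.Ioi 0)) (𝓝 Fp) ∧
      Tendsto (fun ε : ℝ => Ffun β ((x : ℂ) - ε * Complex.I))
        (nhdsWithin 0 (Set.Ioi 0)) (𝓝 Fm) ∧
      Fp * Fm = β) ∧
    (∃ C R : ℝ, ∀ ζ ∈ SlitPlane1, R ≤ ‖ζ‖ →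
      ‖Ffun β ζ - 1‖ ≤ C / Real.sqrt (‖ζ‖)) := by
  have hβ₀ : β ≠ 0 := fun h => hβ (by simp [h])
  exact ⟨differentiableOn_Ffun β, fun ζ hζ => Ffun_ne_zero hβ₀ hζ,
    fun x hx => Ffun_boundary_mul_of_neg hβ₀ hx,
    fun x hx₀ hx₁ => Ffun_boundary_mul_of_pos hβ₀ hx₀ hx₁, exists_norm_Ffun_sub_one_le hβ₀⟩
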